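/- arXiv:1612.04452 — 2 statements merged into one kernel-verified Lean document; each statement's English description precedes it below -/
import Mathlib

section
/- Let (Ω, F, P) be a probability space, G ⊆ F a sub-σ-algebra, and f ∈ L¹(Ω). Then the conditional expectation E[f|G] is submajorized by f in the Hardy–Littlewood sense: for every s > 0, ∫₀^s μ(u, E[f|G]) du ≤ ∫₀^s μ(u, f) du. -/
/-!
Write `d_f(t) = P(|f| > t)`. By the layer-cake formula `∫₀^s μ(f) = ∫₀^∞ min(d_f(t), s) dt`, and
splitting this integral at a level `c ≥ 0` bounds it by `c s + ∫_c^∞ d_f = c s + ∫ (|f| - c)⁺`, with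
equality at `c = μ(s, f)`, where `d_f ≤ s` exactly above `c`. As `y ↦ (|y| - c)⁺` is convex,
conditional Jensen gives `∫ (|E[f|G]| - c)⁺ ≤ ∫ (|f| - c)⁺`, so with `c = μ(s, f)`:
`∫₀^s μ(E[f|G]) ≤ c s + ∫ (|E[f|G]| - c)⁺ ≤ c s + ∫ (|f| - c)⁺ = ∫₀^s μ(f)`.
-/

open MeasureTheory

/-- Decreasing rearrangement of `f` with respect to the measure `ν`. -/
noncomputable def decRearr {α : Type*} [MeasurableSpace α] (ν : Measure α)
    (f : α → ℝ) (t : ℝ) : ℝ :=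
  sInf {s : ℝ | 0 < s ∧ ν {u | s < |f u|} ≤ ENNReal.ofReal t}

open Set Filter Topology
open scoped ENNReal

noncomputable def distFun {α : Type*} [MeasurableSpace α] (ν : Measure α) (f : α → ℝ)
    (t : ℝ) : ℝ≥0∞ :=
  ν {x | t < |f x|}

section

variable {α : Type*} [MeasurableSpace α] {ν : Measure α} {f : α → ℝ}

lemma distFun_antitone : Antitone (distFun ν f) := fun _ _ hab =>
  measure_mono fun _ hx => hab.trans_lt hx

lemma distFun_eq_iSup (t : ℝ) :
    distFun ν f t = ⨆ n : ℕ, distFun ν f (t + 1 / (n + 1)) := by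
  have hUnion : {x | t < |f x|} = ⋃ n : ℕ, {x | t + 1 / (n + 1) < |f x|} := by
    ext x
    simp only [mem_ofPred_eq, mem_iUnion]
    refine ⟨fun hx => ?_, fun ⟨n, hn⟩ => (le_add_of_nonneg_right (by positivity)).trans_lt hn⟩
    obtain ⟨n, hn⟩ := exists_nat_one_div_lt (sub_pos.2 hx)
    exact ⟨n, by linarith⟩
  have hmono : Monotone fun n : ℕ => {x | t + 1 / (n + 1 : ℝ) < |f x|} := fun m n hmn x hx => by
    have : t + 1 / (n + 1 : ℝ) ≤ t + 1 / (m + 1) := by gcongr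
    exact this.trans_lt hx
  rw [distFun, hUnion, hmono.measure_iUnion]
  rfl

lemma decRearr_nonneg (u : ℝ) : 0 ≤ decRearr ν f u :=
  Real.sInf_nonneg fun _ hs => hs.1.le

lemma lintegral_distFun_Ioi (hf : AEMeasurable f ν) (c : ℝ) :
    ∫⁻ t in Ioi c, distFun ν f t = ∫⁻ x, ENNReal.ofReal (max (|f x| - c) 0) ∂ν := by
  have hmeas : AEMeasurable (fun x => max (|f x| - c) 0) ν := by fun_prop
  rw [lintegral_eq_lintegral_meas_lt ν (f := fun x => max (|f x| - c) 0)
    (ae_of_all _ fun _ => le_max_right _ _) hmeas]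
  have hshift : ∫⁻ t in Ioi 0, distFun ν f (t + c) = ∫⁻ t in Ioi c, distFun ν f t := by
    rw [(measurePreserving_add_right volume c).setLIntegral_comp_emb
      (MeasurableEquiv.addRight c).measurableEmbedding, image_add_const_Ioi, zero_add]
  rw [← hshift]
  refine setLIntegral_congr_fun measurableSet_Ioi fun t ht => congrArg ν ?_
  ext x
  simp only [mem_ofPred_eq, lt_max_iff]
  constructor
  · intro h; left; linarith
  · rintro (h | h) <;> linarith [mem_Ioi.1 ht]

lemma lintegral_min_distFun_le {c : ℝ} (hc : 0 ≤ c) (s : ℝ) :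
    ∫⁻ t in Ioi 0, min (distFun ν f t) (ENNReal.ofReal s) ≤
      ENNReal.ofReal c * ENNReal.ofReal s + ∫⁻ t in Ioi c, distFun ν f t := by
  rw [← Ioc_union_Ioi_eq_Ioi hc, lintegral_union measurableSet_Ioi (Ioc_disjoint_Ioi le_rfl)]
  gcongr
  · calc ∫⁻ t in Ioc 0 c, min (distFun ν f t) (ENNReal.ofReal s)
        ≤ ∫⁻ _ in Ioc 0 c, ENNReal.ofReal s := lintegral_mono fun _ => min_le_right _ _
      _ = ENNReal.ofReal c * ENNReal.ofReal s := by
        rw [setLIntegral_const, Real.volume_Ioc, sub_zero, mul_comm]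
  · exact min_le_left _ _

lemma MeasureTheory.Integrable.max_abs_sub_const_zero (hf : Integrable f ν) {c : ℝ}
    (hc : 0 ≤ c) :
    Integrable (fun x => max (|f x| - c) 0) ν :=
  hf.abs.mono' (by fun_prop) (ae_of_all _ fun x => by
    rw [Real.norm_eq_abs, abs_of_nonneg (le_max_right _ _)]
    exact max_le (by linarith) (abs_nonneg _))

lemma ofReal_mul_add_lintegral_max_abs_sub (hf : Integrable f ν) {c s : ℝ} (hc : 0 ≤ c)
    (hs : 0 ≤ s) :
    ENNReal.ofReal c * ENNReal.ofReal s + ∫⁻ x, ENNReal.ofReal (max (|f x| - c) 0) ∂ν =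
      ENNReal.ofReal (c * s + ∫ x, max (|f x| - c) 0 ∂ν) := by
  rw [← ofReal_integral_eq_lintegral_ofReal (hf.max_abs_sub_const_zero hc)
    (ae_of_all _ fun _ => le_max_right _ _), ← ENNReal.ofReal_mul hc,
    ← ENNReal.ofReal_add (by positivity) (by positivity)]

variable [IsFiniteMeasure ν]

lemma tendsto_distFun_atTop (hf : AEMeasurable f ν) :
    Tendsto (distFun ν f) atTop (𝓝 0) := by
  have hempty : ⋂ t : ℝ, {x | t < |f x|} = ∅ :=
    eq_empty_of_forall_notMem fun x hx => lt_irrefl (|f x|) (mem_iInter.1 hx _)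
  have := tendsto_measure_iInter_atTop (μ := ν) (s := fun t : ℝ => {x | t < |f x|})
    (fun _ => nullMeasurableSet_lt aemeasurable_const hf.abs) (fun _ _ hab _ hx => hab.trans_lt hx)
    ⟨0, measure_ne_top _ _⟩
  rwa [hempty, measure_empty] at this

lemma distFun_ne_top (t : ℝ) : distFun ν f t ≠ ∞ := measure_ne_top _ _

lemma nonempty_decRearr_set (hf : AEMeasurable f ν) {u : ℝ} (hu : 0 < u) :
    {s : ℝ | 0 < s ∧ distFun ν f s ≤ ENNReal.ofReal u}.Nonempty := by
  have hev := ((tendsto_distFun_atTop hf).eventually (gt_mem_nhds (ENNReal.ofReal_pos.2 hu))).and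
    (eventually_gt_atTop 0)
  obtain ⟨s, hs, hs0⟩ := hev.exists
  exact ⟨s, hs0, hs.le⟩

lemma decRearr_le_iff (hf : AEMeasurable f ν) {u l : ℝ} (hu : 0 < u) (hl : 0 < l) :
    decRearr ν f u ≤ l ↔ distFun ν f l ≤ ENNReal.ofReal u := by
  have hbdd : BddBelow {s : ℝ | 0 < s ∧ distFun ν f s ≤ ENNReal.ofReal u} :=
    ⟨0, fun _ hs => hs.1.le⟩
  refine ⟨fun h => ?_, fun h => csInf_le hbdd ⟨hl, h⟩⟩
  rw [distFun_eq_iSup]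
  refine iSup_le fun n => ?_
  have hlt : decRearr ν f u < l + 1 / (n + 1) := h.trans_lt (lt_add_of_pos_right _ (by positivity))
  obtain ⟨s, hs, hsl⟩ := (csInf_lt_iff hbdd (nonempty_decRearr_set hf hu)).1 hlt
  exact (distFun_antitone hsl.le).trans hs.2

lemma lt_decRearr_iff (hf : AEMeasurable f ν) {u l : ℝ} (hu : 0 < u) (hl : 0 < l) :
    l < decRearr ν f u ↔ ENNReal.ofReal u < distFun ν f l := by
  simpa only [not_le] using (decRearr_le_iff hf hu hl).not

lemma antitoneOn_decRearr (hf : AEMeasurable f ν) : AntitoneOn (decRearr ν f) (Ioi 0) :=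
  fun _ hu _ _ huv => csInf_le_csInf ⟨0, fun _ hs => hs.1.le⟩ (nonempty_decRearr_set hf hu)
    fun _ hs => ⟨hs.1, hs.2.trans (ENNReal.ofReal_le_ofReal huv)⟩

lemma aemeasurable_decRearr (hf : AEMeasurable f ν) (s : ℝ) :
    AEMeasurable (decRearr ν f) (volume.restrict (Ioo 0 s)) :=
  aemeasurable_restrict_of_antitoneOn measurableSet_Ioo
    ((antitoneOn_decRearr hf).mono Ioo_subset_Ioi_self)

lemma lintegral_decRearr (hf : AEMeasurable f ν) (s : ℝ) :
    ∫⁻ u in Ioo 0 s, ENNReal.ofReal (decRearr ν f u) =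
      ∫⁻ t in Ioi 0, min (distFun ν f t) (ENNReal.ofReal s) := by
  rw [lintegral_eq_lintegral_meas_lt _ (ae_of_all _ decRearr_nonneg) (aemeasurable_decRearr hf s)]
  refine setLIntegral_congr_fun measurableSet_Ioi fun t ht => ?_
  have hlevel : {u | t < decRearr ν f u} ∩ Ioo 0 s = Ioo 0 (min (distFun ν f t).toReal s) := by
    have key : ∀ u, 0 < u → (t < decRearr ν f u ↔ u < (distFun ν f t).toReal) := fun u hu =>
      (lt_decRearr_iff hf hu ht).trans
        (ENNReal.ofReal_lt_iff_lt_toReal hu.le (distFun_ne_top _))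
    ext u
    simp only [mem_inter_iff, mem_ofPred_eq, mem_Ioo, lt_min_iff]
    have := key u
    tauto
  rw [Measure.restrict_apply' measurableSet_Ioo, hlevel, Real.volume_Ioo, sub_zero,
    ENNReal.ofReal_min, ENNReal.ofReal_toReal (distFun_ne_top _)]

lemma lintegral_min_distFun_eq (hf : AEMeasurable f ν) {s : ℝ} (hs : 0 < s) :
    ∫⁻ t in Ioi 0, min (distFun ν f t) (ENNReal.ofReal s) =
      ENNReal.ofReal (decRearr ν f s) * ENNReal.ofReal s +
        ∫⁻ t in Ioi (decRearr ν f s), distFun ν f t := by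
  have hc := decRearr_nonneg (ν := ν) (f := f) s
  refine le_antisymm (lintegral_min_distFun_le hc s) ?_
  rw [← Ioc_union_Ioi_eq_Ioi hc, lintegral_union measurableSet_Ioi (Ioc_disjoint_Ioi le_rfl),
    ← setLIntegral_congr Ioo_ae_eq_Ioc]
  refine add_le_add ?_ ?_
  · calc ENNReal.ofReal (decRearr ν f s) * ENNReal.ofReal s
        = ∫⁻ _ in Ioo 0 (decRearr ν f s), ENNReal.ofReal s := by
          rw [setLIntegral_const, Real.volume_Ioo, sub_zero, mul_comm]
      _ ≤ _ := setLIntegral_mono' measurableSet_Ioo fun t ht =>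
          le_min ((lt_decRearr_iff hf hs ht.1).1 ht.2).le le_rfl
  · exact setLIntegral_mono' measurableSet_Ioi fun t ht =>
      le_min le_rfl ((decRearr_le_iff hf hs (hc.trans_lt ht)).1 (mem_Ioi.1 ht).le)

lemma lintegral_decRearr_le (hf : AEMeasurable f ν) {c : ℝ} (hc : 0 ≤ c) (s : ℝ) :
    ∫⁻ u in Ioo 0 s, ENNReal.ofReal (decRearr ν f u) ≤
      ENNReal.ofReal c * ENNReal.ofReal s + ∫⁻ x, ENNReal.ofReal (max (|f x| - c) 0) ∂ν := by
  rw [lintegral_decRearr hf, ← lintegral_distFun_Ioi hf]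
  exact lintegral_min_distFun_le hc s

lemma lintegral_decRearr_eq (hf : AEMeasurable f ν) {s : ℝ} (hs : 0 < s) :
    ∫⁻ u in Ioo 0 s, ENNReal.ofReal (decRearr ν f u) =
      ENNReal.ofReal (decRearr ν f s) * ENNReal.ofReal s +
        ∫⁻ x, ENNReal.ofReal (max (|f x| - decRearr ν f s) 0) ∂ν := by
  rw [lintegral_decRearr hf, ← lintegral_distFun_Ioi hf]
  exact lintegral_min_distFun_eq hf hs

lemma integral_decRearr_le (hf : Integrable f ν) {c s : ℝ} (hc : 0 ≤ c) (hs : 0 ≤ s) :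
    ∫ u in Ioo 0 s, decRearr ν f u ≤ c * s + ∫ x, max (|f x| - c) 0 ∂ν := by
  have h := lintegral_decRearr_le hf.aemeasurable hc s
  rw [ofReal_mul_add_lintegral_max_abs_sub hf hc hs] at h
  rw [integral_eq_lintegral_of_nonneg_ae (ae_of_all _ decRearr_nonneg)
    (aemeasurable_decRearr hf.aemeasurable s).aestronglyMeasurable]
  exact ENNReal.toReal_le_of_le_ofReal (by positivity) h

lemma integral_decRearr_eq (hf : Integrable f ν) {s : ℝ} (hs : 0 < s) :
    ∫ u in Ioo 0 s, decRearr ν f u =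
      decRearr ν f s * s + ∫ x, max (|f x| - decRearr ν f s) 0 ∂ν := by
  have h := lintegral_decRearr_eq hf.aemeasurable hs
  rw [ofReal_mul_add_lintegral_max_abs_sub hf (decRearr_nonneg s) hs.le] at h
  rw [integral_eq_lintegral_of_nonneg_ae (ae_of_all _ decRearr_nonneg)
    (aemeasurable_decRearr hf.aemeasurable s).aestronglyMeasurable, h,
    ENNReal.toReal_ofReal (add_nonneg (mul_nonneg (decRearr_nonneg s) hs.le) (by positivity))]

end

lemma integral_max_abs_condExp_sub_le {Ω : Type*} {m m0 : MeasurableSpace Ω} {μ : Measure Ω}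
    (hm : m ≤ m0) [SigmaFinite (μ.trim hm)] {f : Ω → ℝ} (hf : Integrable f μ) {c : ℝ}
    (hc : 0 ≤ c) :
    ∫ x, max (|μ[f|m] x| - c) 0 ∂μ ≤ ∫ x, max (|f x| - c) 0 ∂μ := by
  have hφ : ConvexOn ℝ univ fun y : ℝ => max (|y| - c) 0 :=
    (convexOn_univ_norm.sub (concaveOn_const c convex_univ)).sup (convexOn_const 0 convex_univ)
  have hφ_lsc : LowerSemicontinuous fun y : ℝ => max (|y| - c) 0 :=
    ((continuous_abs.sub continuous_const).max continuous_const).lowerSemicontinuous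
  have hjensen := hφ.map_condExp_le_univ hm hφ_lsc hf (hf.max_abs_sub_const_zero hc)
  calc ∫ x, max (|μ[f|m] x| - c) 0 ∂μ ≤ ∫ x, μ[fun y => max (|f y| - c) 0|m] x ∂μ :=
        integral_mono_ae (integrable_condExp.max_abs_sub_const_zero hc) integrable_condExp hjensen
    _ = ∫ x, max (|f x| - c) 0 ∂μ := integral_condExp hm

theorem stmt_11 {Ω : Type*} {m0 : MeasurableSpace Ω} (P : Measure Ω)
    [IsProbabilityMeasure P] (G : MeasurableSpace Ω) (hG : G ≤ m0)
    (f : Ω → ℝ) (hf : Integrable f P) :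
    ∀ s > (0:ℝ),
      ∫ u in Set.Ioo (0:ℝ) s, @decRearr Ω m0 P (P[f|G]) u ≤
        ∫ u in Set.Ioo (0:ℝ) s, @decRearr Ω m0 P f u := by
  intro s hs
  -- otherwise the explicit `G` would be taken as the `MeasurableSpace` instance
  let := m0
  have hc := decRearr_nonneg (ν := P) (f := f) s
  calc ∫ u in Ioo 0 s, decRearr P (P[f|G]) u
      ≤ decRearr P f s * s + ∫ x, max (|P[f|G] x| - decRearr P f s) 0 ∂P :=
        integral_decRearr_le integrable_condExp hc hs.le
    _ ≤ decRearr P f s * s + ∫ x, max (|f x| - decRearr P f s) 0 ∂P := by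
        linarith [integral_max_abs_condExp_sub_le hG hf hc]
    _ = ∫ u in Ioo 0 s, decRearr P f u := (integral_decRearr_eq hf hs).symm
end

section
/- Let q > 0 and define Φ(t) = t²·log(1 + t^q) for t ≥ 0. Then Φ is 2-convex, i.e. the function t ↦ Φ(√t) = t·log(1 + t^{q/2}) is convex on [0,∞), and Φ is (2+q)-concave, i.e. the function t ↦ Φ(t^{1/(2+q)}) = t^{2/(2+q)}·log(1 + t^{q/(2+q)}) is concave on [0,∞). -/
/-!
Both claims follow from the derivative test for convexity. The derivative of
`t ↦ t * log (1 + t ^ r)` is `log (1 + u) + r * u / (1 + u)` with `u = t ^ r`, which increases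
with `t`. With `b = q / (2 + q)` the second function is `s ↦ s ^ (1 - b) * log (1 + s ^ b)`, whose
derivative is `(1 - b) * (log (1 + u) / u) + b / (1 + u)` with `u = s ^ b`; it decreases with `s`
because `log (1 + u) / u` is the slope of a secant of the concave function `log` through `1`.
-/

open Real Set

lemma hasDerivAt_rpow_mul_log_one_add_rpow (p r : ℝ) {s : ℝ} (hs : 0 < s) :
    HasDerivAt (fun s => s ^ p * log (1 + s ^ r))
      (s ^ (p - 1) * (p * log (1 + s ^ r) + r * s ^ r / (1 + s ^ r))) s := by
  have hlog : HasDerivAt (fun s => log (1 + s ^ r)) (r * s ^ (r - 1) / (1 + s ^ r)) s :=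
    ((hasDerivAt_rpow_const (Or.inl hs.ne')).const_add 1).log (by positivity)
  refine ((hasDerivAt_rpow_const (p := p) (Or.inl hs.ne')).mul hlog).congr_deriv ?_
  rw [rpow_sub hs, rpow_sub hs, rpow_one]
  field_simp

lemma continuousOn_rpow_mul_log_one_add_rpow {p r : ℝ} (hp : 0 ≤ p) (hr : 0 ≤ r) :
    ContinuousOn (fun s => s ^ p * log (1 + s ^ r)) (Ici 0) := by
  refine (continuousOn_id.rpow_const fun _ _ => Or.inr hp).mul
    ((continuousOn_const.add (continuousOn_id.rpow_const fun _ _ => Or.inr hr)).log ?_)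
  intro s hs
  have : 0 ≤ s ^ r := rpow_nonneg hs r
  exact (by linarith : (0:ℝ) < 1 + s ^ r).ne'

lemma antitoneOn_log_one_add_div_self : AntitoneOn (fun u => log (1 + u) / u) (Ioi 0) := by
  intro u (hu : 0 < u) v (hv : 0 < v) huv
  have h := strictConcaveOn_log_Ioi.concaveOn.antitoneOn_slope_gt (x := 1) (mem_Ioi.2 one_pos)
    (a := 1 + u) (b := 1 + v) ⟨show 0 < 1 + u by linarith, by linarith⟩
    ⟨show 0 < 1 + v by linarith, by linarith⟩ (by linarith)
  simpa [slope_def_field] using h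

lemma monotoneOn_div_one_add : MonotoneOn (fun u : ℝ => u / (1 + u)) (Ici 0) := by
  intro u hu v hv huv
  simp only [mem_Ici] at hu hv
  rw [div_le_div_iff₀ (by linarith) (by linarith)]
  nlinarith

theorem convexOn_mul_log_one_add_rpow {r : ℝ} (hr : 0 ≤ r) :
    ConvexOn ℝ (Ici 0) (fun t => t * log (1 + t ^ r)) := by
  have hderiv : ∀ t : ℝ, 0 < t → HasDerivAt (fun t => t * log (1 + t ^ r))
      (log (1 + t ^ r) + r * (t ^ r / (1 + t ^ r))) t := by
    intro t ht
    simpa only [rpow_one, sub_self, rpow_zero, one_mul, mul_div_assoc]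
      using hasDerivAt_rpow_mul_log_one_add_rpow 1 r ht
  refine MonotoneOn.convexOn_of_deriv (convex_Ici 0) ?_ ?_ ?_
  · simpa only [rpow_one] using continuousOn_rpow_mul_log_one_add_rpow zero_le_one hr
  · rw [interior_Ici]
    exact fun t ht => (hderiv t ht).differentiableAt.differentiableWithinAt
  · rw [interior_Ici]
    intro x hx y hy hxy
    simp only [(hderiv x hx).deriv, (hderiv y hy).deriv]
    have hxr : 0 ≤ x ^ r := rpow_nonneg hx.le r
    have hle : x ^ r ≤ y ^ r := rpow_le_rpow hx.le hxy hr
    exact add_le_add (log_le_log (by linarith) (by linarith))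
      (mul_le_mul_of_nonneg_left (monotoneOn_div_one_add hxr (hxr.trans hle) hle) hr)

theorem concaveOn_rpow_one_sub_mul_log_one_add_rpow {b : ℝ} (hb₀ : 0 ≤ b) (hb₁ : b ≤ 1) :
    ConcaveOn ℝ (Ici 0) (fun s => s ^ (1 - b) * log (1 + s ^ b)) := by
  have hderiv : ∀ s : ℝ, 0 < s → HasDerivAt (fun s => s ^ (1 - b) * log (1 + s ^ b))
      ((1 - b) * (log (1 + s ^ b) / s ^ b) + b / (1 + s ^ b)) s := by
    intro s hs
    refine (hasDerivAt_rpow_mul_log_one_add_rpow (1 - b) b hs).congr_deriv ?_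
    rw [show 1 - b - 1 = -b by ring, rpow_neg hs.le]
    field_simp
  refine AntitoneOn.concaveOn_of_deriv (convex_Ici 0) ?_ ?_ ?_
  · exact continuousOn_rpow_mul_log_one_add_rpow (by linarith) hb₀
  · rw [interior_Ici]
    exact fun t ht => (hderiv t ht).differentiableAt.differentiableWithinAt
  · rw [interior_Ici]
    intro x hx y hy hxy
    simp only [(hderiv x hx).deriv, (hderiv y hy).deriv]
    have hxb : 0 < x ^ b := rpow_pos_of_pos hx b
    have hle : x ^ b ≤ y ^ b := rpow_le_rpow hx.le hxy hb₀
    exact add_le_add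
      (mul_le_mul_of_nonneg_left (antitoneOn_log_one_add_div_self hxb (hxb.trans_le hle) hle)
        (by linarith))
      (div_le_div_of_nonneg_left hb₀ (by linarith) (by linarith))

theorem stmt_19 (q : ℝ) (hq : 0 < q)
    (Φ : ℝ → ℝ) (hΦ : ∀ t : ℝ, 0 ≤ t → Φ t = t ^ 2 * Real.log (1 + t ^ q)) :
    ConvexOn ℝ (Set.Ici (0:ℝ)) (fun t => Φ (Real.sqrt t)) ∧
    ConcaveOn ℝ (Set.Ici (0:ℝ)) (fun t => Φ (t ^ (1 / (2 + q)))) := by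
  constructor
  · refine (convexOn_mul_log_one_add_rpow (r := q / 2) (by positivity)).congr fun t ht => ?_
    rw [hΦ _ (sqrt_nonneg t), sq_sqrt ht, sqrt_eq_rpow, ← rpow_mul ht, one_div_mul_eq_div]
  · have hb₁ : q / (2 + q) ≤ 1 := (div_le_one (by positivity)).mpr (by linarith)
    refine (concaveOn_rpow_one_sub_mul_log_one_add_rpow (by positivity) hb₁).congr
      fun t ht => ?_
    have h2q : 2 + q ≠ 0 := by positivity
    have e₁ : 1 / (2 + q) * ((2 : ℕ) : ℝ) = 1 - q / (2 + q) := by field_simp; norm_num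
    have e₂ : 1 / (2 + q) * q = q / (2 + q) := one_div_mul_eq_div _ _
    rw [hΦ _ (rpow_nonneg ht _), ← rpow_natCast, ← rpow_mul ht, ← rpow_mul ht, e₁, e₂]
end
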